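/- Define Eve's projectors on ℂ^d_E ⊗ (ℂ²_{e₁}⊗ℂ²_{e₂}⊗ℂ²_{e₃}): M₄,₁ = I_E⊗|1⟩⟨1|_{e₁}⊗|0⟩⟨0|_{e₂}⊗|0⟩⟨0|_{e₃}; M₄,₂ = |1⟩⟨1|_E⊗|1⟩⟨1|_{e₁}⊗|0⟩⟨0|_{e₂}⊗|1⟩⟨1|_{e₃}; M₄,₃ = P_E{1,…,d−1}⊗|0⟩⟨0|_{e₁}⊗|1⟩⟨1|_{e₂}⊗|1⟩⟨1|_{e₃}; M₄,₄ = P_E{1,…,d−1}⊗|0⟩⟨0|_{e₁}⊗|0⟩⟨0|_{e₂}⊗I_{e₃}; M₄,₅ = I − M₄,₁ − M₄,₂ − M₄,₃ − M₄,₄, where P_E{1,…,d−1} = Σ_{k=1}^{d−1}|k⟩⟨k|_E. Then, tensored with the identity on all other factors: M₄,₁ acts as the identity on every post-measurement state arising from H₃; M₄,₂ on those from H₆; M₄,₃ on those from H₉; M₄,₄ on those from H₄; and M₄,₅ on those from each of H₁, H₂, H₅, H₇, H₈, H₁₀. (Step 2 of the proof of Theorem 9: Eve's first measurement identifies the subsets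 H₃, H₆, H₉, H₄.) -/

import Mathlib

noncomputable section

/-- View a coefficient function as a vector of the Euclidean (Hilbert) space. -/
def ofFun {ι : Type*} [Fintype ι] (f : ι → ℂ) : EuclideanSpace ℂ ι := WithLp.toLp 2 f

/-- Transport an endomorphism of the coefficient functions to the Euclidean space. -/
def toE {ι : Type*} [Fintype ι] (T : (ι → ℂ) →ₗ[ℂ] (ι → ℂ)) :
    Module.End ℂ (EuclideanSpace ℂ ι) :=
  (WithLp.linearEquiv 2 ℂ (ι → ℂ)).symm.toLinearMap ∘ₗ T ∘ₗ
    (WithLp.linearEquiv 2 ℂ (ι → ℂ)).toLinearMap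

open Classical in
/-- Diagonal orthogonal projection keeping exactly the basis vectors whose index
satisfies `f`. -/
def diagP {ι : Type*} [Fintype ι] (f : ι → Prop) : Module.End ℂ (EuclideanSpace ℂ ι) :=
  toE (LinearMap.pi fun i => (if f i then (1 : ℂ) else 0) • LinearMap.proj i)

/-- Tensor product of two vectors, realized on the product index set. -/
def tensE {ι κ : Type*} [Fintype ι] [Fintype κ]
    (u : EuclideanSpace ℂ ι) (w : EuclideanSpace ℂ κ) : EuclideanSpace ℂ (ι × κ) :=
  ofFun fun p => u p.1 * w p.2

/-- The root of unity `ω_n = e^{2πi/n}`. -/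
def omegaC (n : ℕ) : ℂ := Complex.exp (2 * Real.pi * Complex.I / n)

/-- Computational basis vector `|k⟩` of `ℂ^d`. -/
def ketD (d k : ℕ) : EuclideanSpace ℂ (Fin d) :=
  ofFun fun u => if (u : ℕ) = k then 1 else 0

/-- The (unnormalized) vector `|α_i⟩ = Σ_{u=0}^{d−1} ω_d^{iu}|u⟩`. -/
def alphaD (d i : ℕ) : EuclideanSpace ℂ (Fin d) :=
  ofFun fun u => omegaC d ^ (i * (u : ℕ))

/-- The (unnormalized) vector `|γ_m⟩ = Σ_{u=0}^{d−2} ω_{d−1}^{mu}|u+1⟩`. -/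
def gammaD (d m : ℕ) : EuclideanSpace ℂ (Fin d) :=
  ofFun fun u => if (u : ℕ) = 0 then 0 else omegaC (d - 1) ^ (m * ((u : ℕ) - 1))

/-- Tensor product of five vectors of `ℂ^d`, realized on the index set `Fin 5 → Fin d`. -/
def tp5 {d : ℕ} (v0 v1 v2 v3 v4 : EuclideanSpace ℂ (Fin d)) :
    EuclideanSpace ℂ (Fin 5 → Fin d) :=
  ofFun fun x => v0 (x 0) * v1 (x 1) * v2 (x 2) * v3 (x 3) * v4 (x 4)

/-- The states of set (5): family `k : Fin 10` corresponds to `H_{k+1}`; the parameter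
`a` is the spectral parameter (`i ∈ ℤ_d` for `H₁,…,H₅`, `m ∈ ℤ_{d−1}` for `H₆,…,H₁₀`),
and `p` is the index of the computational basis vector `|p⟩ ∈ {|1⟩,…,|d−1⟩}`. -/
def stateOf (d : ℕ) (k : Fin 10) (a p : ℕ) : EuclideanSpace ℂ (Fin 5 → Fin d) :=
  if k = 0 then tp5 (alphaD d a) (alphaD d a) (ketD d p) (ketD d 0) (ketD d 0)
  else if k = 1 then tp5 (alphaD d a) (ketD d p) (ketD d 0) (ketD d 0) (alphaD d a)
  else if k = 2 then tp5 (ketD d p) (ketD d 0) (ketD d 0) (alphaD d a) (alphaD d a)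
  else if k = 3 then tp5 (ketD d 0) (ketD d 0) (alphaD d a) (alphaD d a) (ketD d p)
  else if k = 4 then tp5 (ketD d 0) (alphaD d a) (alphaD d a) (ketD d p) (ketD d 0)
  else if k = 5 then tp5 (gammaD d a) (ketD d 0) (ketD d p) (ketD d 0) (ketD d 1)
  else if k = 6 then tp5 (ketD d 0) (ketD d p) (ketD d 0) (ketD d 1) (gammaD d a)
  else if k = 7 then tp5 (ketD d p) (ketD d 0) (ketD d 1) (gammaD d a) (ketD d 0)
  else if k = 8 then tp5 (ketD d 0) (ketD d 1) (gammaD d a) (ketD d 0) (ketD d p)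
  else tp5 (ketD d 1) (gammaD d a) (ketD d 0) (ketD d p) (ketD d 0)

/-- Ranges of the parameters of the states of set (5). -/
def validIdx (d : ℕ) (k : Fin 10) (a p : ℕ) : Prop :=
  (if (k : ℕ) < 5 then a < d else a < d - 1) ∧ 1 ≤ p ∧ p < d

/-- The full Hilbert space: five `ℂ^d` subsystems `A,B,C,D,E` (positions `0,…,4`),
ancilla qubits `a,b,c` (first `Fin 3 → Fin 2` factor, attached to `A,B,C`),
ancilla qubits `v₁,v₂,v₃` (second factor, held by Dave),
and ancilla qubits `e₁,e₂,e₃` (third factor, held by Eve). -/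
abbrev W3 (d : ℕ) : Type :=
  EuclideanSpace ℂ
    ((Fin 5 → Fin d) × ((Fin 3 → Fin 2) × (Fin 3 → Fin 2) × (Fin 3 → Fin 2)))

/-- The ancilla state `|G⟩_{av₁e₁} ⊗ |G⟩_{bv₂e₂} ⊗ |G⟩_{cv₃e₃}`, where
`|G⟩ = (|000⟩+|111⟩)/√2`. -/
def ancG : EuclideanSpace ℂ ((Fin 3 → Fin 2) × (Fin 3 → Fin 2) × (Fin 3 → Fin 2)) :=
  ofFun fun q =>
    ∏ k : Fin 3,
      (if q.1 k = q.2.1 k ∧ q.2.1 k = q.2.2 k then (Real.sqrt 2 : ℂ)⁻¹ else 0)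

/-- The measurement projector
`Q_{Xx} = |0⟩⟨0|_X ⊗ |0⟩⟨0|_x + (Σ_{k=1}^{d−1}|k⟩⟨k|_X) ⊗ |1⟩⟨1|_x`
on the main subsystem at position `X` and its ancilla qubit at position `j`. -/
def QprojG (d : ℕ) (X : Fin 5) (j : Fin 3) : Module.End ℂ (W3 d) :=
  diagP fun q => ((q.1 X : ℕ) = 0 ∧ q.2.1 j = 0) ∨ ((q.1 X : ℕ) ≠ 0 ∧ q.2.1 j = 1)

/-- The post-measurement state
`(Q_{Aa}Q_{Bb}Q_{Cc})(|h⟩ ⊗ |G⟩_{av₁e₁} ⊗ |G⟩_{bv₂e₂} ⊗ |G⟩_{cv₃e₃})`. -/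
def postG (d : ℕ) (h : EuclideanSpace ℂ (Fin 5 → Fin d)) : W3 d :=
  (QprojG d 0 0 * QprojG d 1 1 * QprojG d 2 2) (tensE h ancG)

/-- Eve's projector `M₄,₁ = I_E ⊗ |1⟩⟨1|_{e₁} ⊗ |0⟩⟨0|_{e₂} ⊗ |0⟩⟨0|_{e₃}`. -/
def eveM41 (d : ℕ) : Module.End ℂ (W3 d) :=
  diagP fun q => q.2.2.2 0 = 1 ∧ q.2.2.2 1 = 0 ∧ q.2.2.2 2 = 0

/-- Eve's projector `M₄,₂ = |1⟩⟨1|_E ⊗ |1⟩⟨1|_{e₁} ⊗ |0⟩⟨0|_{e₂} ⊗ |1⟩⟨1|_{e₃}`. -/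
def eveM42 (d : ℕ) : Module.End ℂ (W3 d) :=
  diagP fun q => (q.1 4 : ℕ) = 1 ∧ q.2.2.2 0 = 1 ∧ q.2.2.2 1 = 0 ∧ q.2.2.2 2 = 1

/-- Eve's projector `M₄,₃ = P_E{1,…,d−1} ⊗ |0⟩⟨0|_{e₁} ⊗ |1⟩⟨1|_{e₂} ⊗ |1⟩⟨1|_{e₃}`. -/
def eveM43 (d : ℕ) : Module.End ℂ (W3 d) :=
  diagP fun q => (q.1 4 : ℕ) ≠ 0 ∧ q.2.2.2 0 = 0 ∧ q.2.2.2 1 = 1 ∧ q.2.2.2 2 = 1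

/-- Eve's projector `M₄,₄ = P_E{1,…,d−1} ⊗ |0⟩⟨0|_{e₁} ⊗ |0⟩⟨0|_{e₂} ⊗ I_{e₃}`. -/
def eveM44 (d : ℕ) : Module.End ℂ (W3 d) :=
  diagP fun q => (q.1 4 : ℕ) ≠ 0 ∧ q.2.2.2 0 = 0 ∧ q.2.2.2 1 = 0

/-- Eve's projector `M₄,₅ = I − M₄,₁ − M₄,₂ − M₄,₃ − M₄,₄`. -/
def eveM45 (d : ℕ) : Module.End ℂ (W3 d) :=
  1 - eveM41 d - eveM42 d - eveM43 d - eveM44 d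


/-! The ancilla GHZ states give Eve's qubit `eⱼ` the same value as the ancilla qubit attached
to the `j`-th of `A, B, C`, and `Q_{Xx}` keeps only the basis vectors on which that ancilla
bit records whether `X` is in `|0⟩`. So on the support of a post-measurement state Eve's bits
are the pattern `(A ≠ 0, B ≠ 0, C ≠ 0)` of the underlying basis vector. Eve's projectors are
diagonal, and each family `H_k` fixes this pattern and the shape of `E` (for instance
`H₃ = |p⟩|0⟩|0⟩|α⟩|α⟩` has pattern `(1, 0, 0)`), which decides the projector it passes. -/

open Classical in
lemma diagP_apply {ι : Type*} [Fintype ι] (f : ι → Prop) (v : EuclideanSpace ℂ ι) (q : ι) :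
    diagP f v q = if f q then v q else 0 := by
  show (if f q then (1 : ℂ) else 0) • v q = _
  split <;> simp

lemma diagP_apply_eq_self {ι : Type*} [Fintype ι] {f : ι → Prop} {v : EuclideanSpace ℂ ι}
    (h : ∀ q, v q ≠ 0 → f q) : diagP f v = v := by
  ext q
  rw [diagP_apply]
  split_ifs with hq
  · rfl
  · exact (not_imp_comm.mp (h q) hq).symm

lemma diagP_apply_eq_zero {ι : Type*} [Fintype ι] {f : ι → Prop} {v : EuclideanSpace ℂ ι}
    (h : ∀ q, v q ≠ 0 → ¬ f q) : diagP f v = 0 := by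
  ext q
  rw [diagP_apply]
  split_ifs with hq
  · exact Classical.byContradiction fun hv => h q hv hq
  · rfl

@[simp]
lemma ketD_apply_ne_zero_iff {d k : ℕ} {x : Fin d} : ketD d k x ≠ 0 ↔ (x : ℕ) = k := by
  simp [ketD, ofFun]

@[simp]
lemma alphaD_apply_ne_zero {d i : ℕ} (x : Fin d) : alphaD d i x ≠ 0 :=
  pow_ne_zero _ (Complex.exp_ne_zero _)

@[simp]
lemma gammaD_apply_ne_zero_iff {d m : ℕ} {x : Fin d} : gammaD d m x ≠ 0 ↔ (x : ℕ) ≠ 0 := by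
  simp [gammaD, ofFun, omegaC, Complex.exp_ne_zero]

@[simp]
lemma tp5_apply_ne_zero_iff {d : ℕ} {v0 v1 v2 v3 v4 : EuclideanSpace ℂ (Fin d)}
    {x : Fin 5 → Fin d} : tp5 v0 v1 v2 v3 v4 x ≠ 0 ↔
      v0 (x 0) ≠ 0 ∧ v1 (x 1) ≠ 0 ∧ v2 (x 2) ≠ 0 ∧ v3 (x 3) ≠ 0 ∧ v4 (x 4) ≠ 0 := by
  simp [tp5, ofFun, and_assoc]

lemma ancG_apply_ne_zero {r : (Fin 3 → Fin 2) × (Fin 3 → Fin 2) × (Fin 3 → Fin 2)}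
    (h : ancG r ≠ 0) : r.1 = r.2.1 ∧ r.2.1 = r.2.2 := by
  simp only [ancG, ofFun, WithLp.ofLp_toLp] at h
  have hk : ∀ k, r.1 k = r.2.1 k ∧ r.2.1 k = r.2.2 k := fun k => by
    by_contra hc
    exact Finset.prod_ne_zero_iff.mp h k (Finset.mem_univ k) (if_neg hc)
  exact ⟨funext fun k => (hk k).1, funext fun k => (hk k).2⟩

def nonzeroBit (n : ℕ) : Fin 2 := if n = 0 then 0 else 1

def abcBits {d : ℕ} (x : Fin 5 → Fin d) : Fin 3 → Fin 2 :=
  ![nonzeroBit (x 0), nonzeroBit (x 1), nonzeroBit (x 2)]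

lemma zero_and_zero_or_ne_zero_and_one_iff {n : ℕ} {e : Fin 2} :
    (n = 0 ∧ e = 0) ∨ (n ≠ 0 ∧ e = 1) ↔ e = nonzeroBit n := by
  unfold nonzeroBit
  split_ifs with hn <;> simp [hn]

lemma postG_apply_ne_zero {d : ℕ} {h : EuclideanSpace ℂ (Fin 5 → Fin d)}
    {x : Fin 5 → Fin d} {u v e : Fin 3 → Fin 2} (hq : postG d h (x, u, v, e) ≠ 0) :
    h x ≠ 0 ∧ e = abcBits x := by
  simp only [postG, QprojG, Module.End.mul_apply, diagP_apply,
    zero_and_zero_or_ne_zero_and_one_iff] at hq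
  split_ifs at hq with hA hB hC <;> try exact absurd rfl hq
  obtain ⟨hh, ha⟩ := ne_zero_and_ne_zero_of_mul (a := h x) (b := ancG (u, v, e)) hq
  obtain ⟨huv, hve⟩ := ancG_apply_ne_zero ha
  refine ⟨hh, hve.symm.trans (huv.symm.trans (funext fun j => ?_))⟩
  fin_cases j <;> assumption

section

variable {d : ℕ} {h : EuclideanSpace ℂ (Fin 5 → Fin d)}
  {f : (Fin 5 → Fin d) × ((Fin 3 → Fin 2) × (Fin 3 → Fin 2) × (Fin 3 → Fin 2)) → Prop}

lemma diagP_postG_eq_self (hf : ∀ x u v, h x ≠ 0 → f (x, u, v, abcBits x)) :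
    diagP f (postG d h) = postG d h :=
  diagP_apply_eq_self fun ⟨x, u, v, _⟩ hq => by
    obtain ⟨hx, rfl⟩ := postG_apply_ne_zero hq
    exact hf x u v hx

lemma diagP_postG_eq_zero (hf : ∀ x u v, h x ≠ 0 → ¬ f (x, u, v, abcBits x)) :
    diagP f (postG d h) = 0 :=
  diagP_apply_eq_zero fun ⟨x, u, v, _⟩ hq => by
    obtain ⟨hx, rfl⟩ := postG_apply_ne_zero hq
    exact hf x u v hx

end

lemma eveM45_apply_eq_self {d : ℕ} {w : W3 d} (h1 : eveM41 d w = 0) (h2 : eveM42 d w = 0)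
    (h3 : eveM43 d w = 0) (h4 : eveM44 d w = 0) : eveM45 d w = w := by
  simp [eveM45, h1, h2, h3, h4]

theorem thm9_step2_eve_measurement_general (d : ℕ) :
    (∀ a p, validIdx d 2 a p →
      eveM41 d (postG d (stateOf d 2 a p)) = postG d (stateOf d 2 a p)) ∧
    (∀ a p, validIdx d 5 a p →
      eveM42 d (postG d (stateOf d 5 a p)) = postG d (stateOf d 5 a p)) ∧
    (∀ a p, validIdx d 8 a p →
      eveM43 d (postG d (stateOf d 8 a p)) = postG d (stateOf d 8 a p)) ∧
    (∀ a p, validIdx d 3 a p →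
      eveM44 d (postG d (stateOf d 3 a p)) = postG d (stateOf d 3 a p)) ∧
    (∀ k : Fin 10, k ∈ ({0, 1, 4, 6, 7, 9} : Set (Fin 10)) → ∀ a p,
      validIdx d k a p →
      eveM45 d (postG d (stateOf d k a p)) = postG d (stateOf d k a p)) := by
  refine ⟨?_, ?_, ?_, ?_, ?_⟩
  any_goals rintro a p ⟨-, hp, -⟩; apply diagP_postG_eq_self
  on_goal 5 =>
    rintro k hk a p ⟨-, hp, -⟩
    simp only [Set.mem_insert_iff, Set.mem_singleton_iff] at hk
    rcases hk with rfl | rfl | rfl | rfl | rfl | rfl <;>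
      refine eveM45_apply_eq_self ?_ ?_ ?_ ?_ <;> apply diagP_postG_eq_zero
  all_goals
    intro x _ _ hx
    simp only [stateOf, Fin.isValue, Fin.reduceEq, ↓reduceIte, ne_eq, tp5_apply_ne_zero_iff,
      ketD_apply_ne_zero_iff, gammaD_apply_ne_zero_iff, alphaD_apply_ne_zero,
      not_false_eq_true, true_and, and_true] at hx
    simp [abcBits, nonzeroBit, hx] <;> omega

/-- Step 2 of Theorem 9: `M₄,₁` acts as the identity on every
post-measurement state arising from `H₃`; `M₄,₂` on those from `H₆`; `M₄,₃` on those
from `H₉`; `M₄,₄` on those from `H₄`; and `M₄,₅` on those from each of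
`H₁, H₂, H₅, H₇, H₈, H₁₀`. -/
theorem thm9_step2_eve_measurement (d : ℕ) (hd : 3 ≤ d) :
    (∀ a p, validIdx d 2 a p →
      eveM41 d (postG d (stateOf d 2 a p)) = postG d (stateOf d 2 a p)) ∧
    (∀ a p, validIdx d 5 a p →
      eveM42 d (postG d (stateOf d 5 a p)) = postG d (stateOf d 5 a p)) ∧
    (∀ a p, validIdx d 8 a p →
      eveM43 d (postG d (stateOf d 8 a p)) = postG d (stateOf d 8 a p)) ∧
    (∀ a p, validIdx d 3 a p →
      eveM44 d (postG d (stateOf d 3 a p)) = postG d (stateOf d 3 a p)) ∧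
    (∀ k : Fin 10, k ∈ ({0, 1, 4, 6, 7, 9} : Set (Fin 10)) → ∀ a p,
      validIdx d k a p →
      eveM45 d (postG d (stateOf d k a p)) = postG d (stateOf d k a p)) :=
  thm9_step2_eve_measurement_general d
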